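/- arXiv:2201.00219 — 5 statements merged into one kernel-verified Lean document; each statement's English description precedes it below -/
import Mathlib

section
/- For every fixed real a with 0 ≤ a < 1, lim_{n→∞} ( 2n · ∫_0^∞ r · exp{ n(-r² + log(a + r²)) } dr ) / ( √(2πn) · e^{n(a-1)} ) = 1. -/
/-!
Substituting `v = n (a + r²)` turns the numerator into
`e^{na} n^{-n} ∫_{na}^∞ vⁿ e^{-v} dv`. The missing piece `∫_0^{na} vⁿ e^{-v} dv` of
`n! = ∫_0^∞ vⁿ e^{-v} dv` is `o(n!)` because `a < 1`: tilting by `e^{(1-a)(na - v)} ≥ 1`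
on `[0, na]` bounds it by `n! qⁿ / (2 - a)` with `q = e^{a(1-a)} / (2 - a) < 1`. Hence the
numerator is asymptotic to `e^{na} n! / nⁿ`, and Stirling's formula `n! ~ √(2πn) (n/e)ⁿ`
gives the limit.
-/

open MeasureTheory Filter Real Set Asymptotics
open scoped Nat Topology

theorem integrableOn_pow_mul_exp_neg_mul_Ioi (n : ℕ) {c : ℝ} (hc : 0 < c) :
    IntegrableOn (fun v : ℝ => v ^ n * exp (-(c * v))) (Ioi 0) := by
  simpa [rpow_natCast] using
    integrableOn_rpow_mul_exp_neg_mul_rpow (s := n) (by linarith [n.cast_nonneg (α := ℝ)])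
      one_pos hc

theorem integral_pow_mul_exp_neg_mul_Ioi (n : ℕ) {c : ℝ} (hc : 0 < c) :
    ∫ v in Ioi 0, v ^ n * exp (-(c * v)) = n ! / c ^ (n + 1) := by
  have h := integral_rpow_mul_exp_neg_mul_Ioi (a := n + 1) (by positivity) hc
  rw [add_sub_cancel_right, Gamma_nat_eq_factorial, ← Nat.cast_succ] at h
  simp only [rpow_natCast] at h
  rw [h, one_div, inv_pow, div_eq_inv_mul]

theorem integral_Ioc_pow_mul_exp_neg_le (n : ℕ) (x : ℝ) {t : ℝ} (ht : 0 < t) :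
    ∫ v in Ioc 0 x, v ^ n * exp (-v) ≤ exp (t * x) * (n ! / (1 + t) ^ (n + 1)) := by
  have htilt : ∀ v ∈ Ioc 0 x,
      v ^ n * exp (-v) ≤ exp (t * x) * (v ^ n * exp (-((1 + t) * v))) := by
    intro v ⟨hv0, hvx⟩
    rw [mul_left_comm, ← exp_add]
    gcongr
    nlinarith
  calc ∫ v in Ioc 0 x, v ^ n * exp (-v)
      ≤ ∫ v in Ioc 0 x, exp (t * x) * (v ^ n * exp (-((1 + t) * v))) :=
        setIntegral_mono_on (Continuous.integrableOn_Ioc (by fun_prop))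
          (Continuous.integrableOn_Ioc (by fun_prop)) measurableSet_Ioc htilt
    _ = exp (t * x) * ∫ v in Ioc 0 x, v ^ n * exp (-((1 + t) * v)) := integral_const_mul _ _
    _ ≤ exp (t * x) * ∫ v in Ioi 0, v ^ n * exp (-((1 + t) * v)) := by
        refine mul_le_mul_of_nonneg_left (setIntegral_mono_set
          (integrableOn_pow_mul_exp_neg_mul_Ioi n (by linarith)) ?_
          Ioc_subset_Ioi_self.eventuallyLE) (exp_pos _).le
        filter_upwards [ae_restrict_mem measurableSet_Ioi] with v (hv : 0 < v)
        positivity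
    _ = exp (t * x) * (n ! / (1 + t) ^ (n + 1)) := by
        rw [integral_pow_mul_exp_neg_mul_Ioi n (by linarith)]

theorem exp_mul_one_sub_lt_two_sub {a : ℝ} (ha : a < 1) : exp (a * (1 - a)) < 2 - a := by
  have hpos : 0 < 1 - a * (1 - a) := by nlinarith [sq_nonneg (a - 1 / 2)]
  have hle : exp (a * (1 - a)) * (1 - a * (1 - a)) ≤ 1 :=
    calc exp (a * (1 - a)) * (1 - a * (1 - a))
        ≤ exp (a * (1 - a)) * exp (-(a * (1 - a))) := by
          gcongr; linarith [add_one_le_exp (-(a * (1 - a)))]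
      _ = 1 := by rw [← exp_add, add_neg_cancel, exp_zero]
  -- `(2 - a) * (1 - a * (1 - a)) = 1 + (1 - a) ^ 3`
  have hlt : 1 < (2 - a) * (1 - a * (1 - a)) := by nlinarith [pow_pos (sub_pos.2 ha) 3]
  exact lt_of_mul_lt_mul_right (hle.trans_lt hlt) hpos.le

theorem tendsto_integral_Ioc_pow_mul_exp_neg_div_factorial {a : ℝ} (ha : a < 1) :
    Tendsto (fun n : ℕ => (∫ v in Ioc 0 (n * a), v ^ n * exp (-v)) / n !) atTop (𝓝 0) := by
  set q := exp (a * (1 - a)) / (2 - a)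
  have hq0 : 0 ≤ q := div_nonneg (exp_pos _).le (by linarith)
  have hq1 : q < 1 := (div_lt_one (by linarith)).2 (exp_mul_one_sub_lt_two_sub ha)
  refine squeeze_zero (fun n => div_nonneg (setIntegral_nonneg measurableSet_Ioc
      fun v hv => by have := hv.1; positivity) (by positivity)) (fun n => ?_)
    (by simpa using (tendsto_pow_atTop_nhds_zero_of_lt_one hq0 hq1).div_const (2 - a))
  have hbound := integral_Ioc_pow_mul_exp_neg_le n (n * a) (sub_pos.2 ha)
  rw [show 1 + (1 - a) = 2 - a by ring] at hbound
  calc (∫ v in Ioc 0 (n * a), v ^ n * exp (-v)) / n !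
      ≤ exp ((1 - a) * (n * a)) * (n ! / (2 - a) ^ (n + 1)) / n ! := by gcongr
    _ = q ^ n / (2 - a) := by
        rw [div_pow, ← exp_nat_mul, show (n : ℝ) * (a * (1 - a)) = (1 - a) * (n * a) by ring,
          pow_succ]
        field_simp

theorem integral_Ioc_add_integral_Ioi_pow_mul_exp_neg (n : ℕ) {x : ℝ} (hx : 0 ≤ x) :
    (∫ v in Ioc 0 x, v ^ n * exp (-v)) + ∫ v in Ioi x, v ^ n * exp (-v) = n ! := by
  have hint : IntegrableOn (fun v : ℝ => v ^ n * exp (-v)) (Ioi 0) := by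
    simpa using integrableOn_pow_mul_exp_neg_mul_Ioi n one_pos
  rw [← setIntegral_union (Ioc_disjoint_Ioi le_rfl) measurableSet_Ioi
    (hint.mono_set Ioc_subset_Ioi_self) (hint.mono_set (Ioi_subset_Ioi hx)),
    Ioc_union_Ioi_eq_Ioi hx]
  simpa using integral_pow_mul_exp_neg_mul_Ioi n one_pos

theorem isEquivalent_integral_Ioi_pow_mul_exp_neg_factorial {a : ℝ} (ha0 : 0 ≤ a)
    (ha1 : a < 1) :
    (fun n : ℕ => ∫ v in Ioi (n * a), v ^ n * exp (-v)) ~[atTop] fun n => (n ! : ℝ) := by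
  refine isEquivalent_of_tendsto_one ?_
  have h := (tendsto_integral_Ioc_pow_mul_exp_neg_div_factorial ha1).const_sub 1
  rw [sub_zero] at h
  refine h.congr fun n => ?_
  have hsplit := integral_Ioc_add_integral_Ioi_pow_mul_exp_neg n (by positivity : 0 ≤ n * a)
  rw [Pi.div_apply, eq_div_iff (by positivity), sub_mul, div_mul_cancel₀ _ (by positivity)]
  linarith

theorem integral_Ioi_comp_add_mul_sq {E : Type*} [NormedAddCommGroup E] [NormedSpace ℝ E]
    (g : ℝ → E) (c : ℝ) {k : ℝ} (hk : 0 < k) :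
    ∫ r in Ioi 0, (2 * k * r) • g (c + k * r ^ 2) = ∫ v in Ioi c, g v := by
  set f : ℝ → ℝ := fun r => c + k * r ^ 2
  have hderiv (r : ℝ) : HasDerivAt f (2 * k * r) r :=
    (((hasDerivAt_pow 2 r).const_mul k).const_add c).congr_deriv (by push_cast; ring)
  have hmono : StrictMonoOn f (Ici 0) := fun x (hx : 0 ≤ x) y _ hxy => by
    simp only [f]
    gcongr
  have htop : Tendsto f atTop atTop :=
    tendsto_atTop_add_const_left _ c ((tendsto_pow_atTop two_ne_zero).const_mul_atTop hk)
  have himage : f '' Ioi 0 = Ioi c := by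
    simpa [f] using (continuous_const.add (continuous_const.mul (continuous_pow 2))).continuousOn
      |>.image_Ioi_of_strictMonoOn hmono htop
  rw [← himage, integral_image_eq_integral_abs_deriv_smul measurableSet_Ioi
    (fun r _ => (hderiv r).hasDerivWithinAt) (hmono.injOn.mono Ioi_subset_Ici_self) g]
  refine setIntegral_congr_fun measurableSet_Ioi fun r (hr : 0 < r) => ?_
  rw [abs_of_pos (by positivity)]

theorem two_mul_integral_mul_exp_log_eq {a : ℝ} (ha : 0 ≤ a) {n : ℕ} (hn : n ≠ 0) :
    2 * n * ∫ r in Ioi 0, r * exp (n * (-r ^ 2 + log (a + r ^ 2))) =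
      exp (n * a) / n ^ n * ∫ v in Ioi (n * a), v ^ n * exp (-v) := by
  have hn0 : (0 : ℝ) < n := by positivity
  rw [← integral_Ioi_comp_add_mul_sq (fun v => v ^ n * exp (-v)) _ hn0, ← integral_const_mul,
    ← integral_const_mul]
  refine setIntegral_congr_fun measurableSet_Ioi fun r (hr : 0 < r) => ?_
  have hlog : exp (n * (-r ^ 2 + log (a + r ^ 2))) = (a + r ^ 2) ^ n * exp (-(n * r ^ 2)) := by
    rw [mul_add, exp_add, exp_nat_mul (log _), exp_log (by positivity : 0 < a + r ^ 2), mul_neg,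
      mul_comm]
  have hpow : ((n : ℝ) * a + n * r ^ 2) ^ n = n ^ n * (a + r ^ 2) ^ n := by
    rw [← mul_add, mul_pow]
  have hexp : exp (-(n * a + n * r ^ 2)) = exp (-(n * r ^ 2)) / exp (n * a) := by
    rw [neg_add, exp_add, exp_neg, div_eq_mul_inv, mul_comm]
  rw [hlog, smul_eq_mul, hpow, hexp]
  field_simp

/-- For every fixed real `a` with `0 ≤ a < 1`,
`lim_{n→∞} ( 2n · ∫_0^∞ r · exp{ n(-r² + log(a + r²)) } dr ) / ( √(2πn) · e^{n(a-1)} ) = 1`. -/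
theorem laplace_asymptotics (a : ℝ) (ha0 : 0 ≤ a) (ha1 : a < 1) :
    Tendsto (fun n : ℕ =>
      (2 * (n : ℝ) * ∫ r in Set.Ioi (0 : ℝ),
          r * Real.exp ((n : ℝ) * (-r ^ 2 + Real.log (a + r ^ 2)))) /
        (Real.sqrt (2 * Real.pi * n) * Real.exp ((n : ℝ) * (a - 1))))
      atTop (nhds 1) := by
  have hequiv := (isEquivalent_integral_Ioi_pow_mul_exp_neg_factorial ha0 ha1).trans
    Stirling.factorial_isEquivalent_stirling
  have hstirling_ne : ∀ᶠ n : ℕ in atTop, √(2 * n * π) * (n / exp 1) ^ n ≠ 0 := by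
    filter_upwards [eventually_ne_atTop 0] with n hn
    positivity
  refine ((isEquivalent_iff_tendsto_one hstirling_ne).1 hequiv).congr' ?_
  filter_upwards [eventually_ne_atTop 0] with n hn
  rw [Pi.div_apply, two_mul_integral_mul_exp_log_eq ha0 hn, div_pow, exp_one_pow, mul_sub,
    mul_one, exp_sub, show 2 * π * n = 2 * n * π by ring]
  field_simp
end

section
/- Let m ≥ 1 and let b, z_0 ∈ ℂ satisfy Condition (i) or Condition (ii). Then for all λ_1,…,λ_m ≥ 0, all skew-symmetric complex m×m matrices B_{20}, B_{02}, and all t ≥ 0, one has Φ(Λ, B_{20}, B_{02}, t) ≤ m(|z_0|² - 1); moreover equality holds if and only if λ_1 = ⋯ = λ_m = λ_0, B_{20} = 0, B_{02} = 0 and t = 0. In other words, Φ attains its global maximum m(|z_0|²-1) only at the point (λ_0 I_m, 0, 0, 0). -/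
/-!
For `G = F̃ᴴ F̃`, applying `log μ ≤ μ - 1` to the eigenvalues of `G` gives
`2 log |det F̃| = log det G ≤ tr G - 4m`, with equality iff `G = 1`. As
`tr G = ‖F̃‖² = 4 Σ λⱼ² + 4m |z₀|² + 2 |b|² (‖B₂₀‖² + ‖B₀₂‖²)`, this rewrites `Φ` as
`m(|z₀|² - 1) - ¼ (tr G - 4m - log det G) - ½ (1 - |b|²)(‖B₂₀‖² + ‖B₀₂‖²) - t`,
the claimed maximum minus three nonnegative terms. At equality `G = 1` and `t = 0`. If `|b| < 1`
also `B₂₀ = B₀₂ = 0`; if `|b| = 1`, the blocks `b̄ (z̄₀ - z₀) B₂₀ᴴ` and `b̄ (z₀ - z̄₀) B₀₂` of `G`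
vanish, which kills `B₂₀` and `B₀₂` since `z₀ ∉ ℝ`. Once `B₂₀ = B₀₂ = 0`, `G = 1` says exactly
`|z₀|² + λⱼ² = 1`.
-/

open Matrix

/-- Squared Frobenius norm of a complex matrix. -/
noncomputable def frobSq {m : ℕ} (B : Matrix (Fin m) (Fin m) ℂ) : ℝ :=
  ∑ i, ∑ j, ‖B i j‖ ^ 2

/-- The `4m × 4m` block matrix `F̃(Λ, B₂₀, B₀₂)` with block rows
`(b·B₂₀, 0, -z₀·I, Λ)`, `(0, b·B₀₂ᴴ, -Λ, -conj(z₀)·I)`, `(z₀·I, Λ, conj(b)·B₂₀ᴴ, 0)`,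
`(-Λ, conj(z₀)·I, 0, conj(b)·B₀₂)`, where `Λ = diag(λ₁,…,λ_m)`. -/
noncomputable def Ftilde (m : ℕ) (z₀ b : ℂ) (lam : Fin m → ℝ)
    (B20 B02 : Matrix (Fin m) (Fin m) ℂ) :
    Matrix ((Fin m ⊕ Fin m) ⊕ (Fin m ⊕ Fin m)) ((Fin m ⊕ Fin m) ⊕ (Fin m ⊕ Fin m)) ℂ :=
  let Λ : Matrix (Fin m) (Fin m) ℂ := Matrix.diagonal fun j => (lam j : ℂ)
  Matrix.fromBlocks
    (Matrix.fromBlocks (b • B20) 0 0 (b • B02ᴴ))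
    (Matrix.fromBlocks (-(z₀ • (1 : Matrix (Fin m) (Fin m) ℂ))) Λ
      (-Λ) (-((starRingEnd ℂ) z₀ • (1 : Matrix (Fin m) (Fin m) ℂ))))
    (Matrix.fromBlocks (z₀ • (1 : Matrix (Fin m) (Fin m) ℂ)) Λ
      (-Λ) ((starRingEnd ℂ) z₀ • (1 : Matrix (Fin m) (Fin m) ℂ)))
    (Matrix.fromBlocks ((starRingEnd ℂ) b • B20ᴴ) 0 0 ((starRingEnd ℂ) b • B02))

/-- The phase function
`Φ(Λ,B₂₀,B₀₂,t) = -Σ_j λ_j² - (‖B₂₀‖² + ‖B₀₂‖²)/2 - t + (1/2)·log|det F̃|`,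
with value `⊥ = -∞` when `det F̃ = 0`. -/
noncomputable def PhiFn (m : ℕ) (z₀ b : ℂ) (lam : Fin m → ℝ)
    (B20 B02 : Matrix (Fin m) (Fin m) ℂ) (t : ℝ) : EReal :=
  if (Ftilde m z₀ b lam B20 B02).det = 0 then ⊥
  else ((-∑ j, lam j ^ 2 - (frobSq B20 + frobSq B02) / 2 - t
    + (1 / 2) * Real.log (‖(Ftilde m z₀ b lam B20 B02).det‖) : ℝ) : EReal)

open scoped ComplexOrder

namespace Matrix

variable {n 𝕜 : Type*} [Fintype n] [DecidableEq n] [RCLike 𝕜]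

theorem IsHermitian.eq_one_of_eigenvalues_eq_one {A : Matrix n n 𝕜} (hA : A.IsHermitian)
    (h : ∀ i, hA.eigenvalues i = 1) : A = 1 := by
  rw [hA.spectral_theorem]
  simp [Function.comp_def, h]

theorem PosDef.re_trace_sub_card_sub_log_det {A : Matrix n n 𝕜} (hA : A.PosDef) :
    RCLike.re A.trace - Fintype.card n - Real.log (RCLike.re A.det)
      = ∑ i, (hA.isHermitian.eigenvalues i - 1 - Real.log (hA.isHermitian.eigenvalues i)) := by
  have hpos := hA.isHermitian.posDef_iff_eigenvalues_pos.mp hA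
  rw [hA.isHermitian.trace_eq_sum_eigenvalues, hA.isHermitian.det_eq_prod_eigenvalues,
    ← RCLike.ofReal_sum, ← RCLike.ofReal_prod, RCLike.ofReal_re, RCLike.ofReal_re,
    Real.log_prod fun i _ => (hpos i).ne', Finset.sum_sub_distrib, Finset.sum_sub_distrib]
  simp

theorem PosDef.log_det_le_re_trace_sub_card {A : Matrix n n 𝕜} (hA : A.PosDef) :
    Real.log (RCLike.re A.det) ≤ RCLike.re A.trace - Fintype.card n := by
  have hpos := hA.isHermitian.posDef_iff_eigenvalues_pos.mp hA
  have hgap := hA.re_trace_sub_card_sub_log_det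
  have hgap_nonneg :
      0 ≤ ∑ i, (hA.isHermitian.eigenvalues i - 1 - Real.log (hA.isHermitian.eigenvalues i)) :=
    Finset.sum_nonneg fun i _ => by linarith [Real.log_le_sub_one_of_pos (hpos i)]
  linarith

theorem PosDef.log_det_eq_re_trace_sub_card_iff {A : Matrix n n 𝕜} (hA : A.PosDef) :
    Real.log (RCLike.re A.det) = RCLike.re A.trace - Fintype.card n ↔ A = 1 := by
  refine ⟨fun h => hA.isHermitian.eq_one_of_eigenvalues_eq_one fun i => ?_, ?_⟩
  · have hpos := hA.isHermitian.posDef_iff_eigenvalues_pos.mp hA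
    have hgap := hA.re_trace_sub_card_sub_log_det
    rw [h, sub_self, eq_comm, Finset.sum_eq_zero_iff_of_nonneg fun i _ => by
      linarith [Real.log_le_sub_one_of_pos (hpos i)]] at hgap
    by_contra hne
    linarith [hgap i (Finset.mem_univ i), Real.log_lt_sub_one_of_pos (hpos i) hne]
  · rintro rfl
    simp

variable {α β γ δ : Type*} [Fintype α] [Fintype β] [Fintype γ] [Fintype δ]

def sumNormSq (M : Matrix α β 𝕜) : ℝ := ∑ i, ∑ j, ‖M i j‖ ^ 2

theorem sumNormSq_nonneg (M : Matrix α β 𝕜) : 0 ≤ sumNormSq M := by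
  unfold sumNormSq; positivity

theorem trace_conjTranspose_mul_self (M : Matrix α β 𝕜) :
    (Mᴴ * M).trace = (sumNormSq M : 𝕜) := by
  rw [sumNormSq, Finset.sum_comm]
  simp [trace, mul_apply, RCLike.conj_mul]

theorem sumNormSq_eq_zero_iff {M : Matrix α β 𝕜} : sumNormSq M = 0 ↔ M = 0 := by
  rw [← trace_conjTranspose_mul_self_eq_zero_iff, trace_conjTranspose_mul_self,
    RCLike.ofReal_eq_zero]

@[simp] theorem sumNormSq_zero : sumNormSq (0 : Matrix α β 𝕜) = 0 := by
  simp [sumNormSq]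

@[simp] theorem sumNormSq_neg (M : Matrix α β 𝕜) : sumNormSq (-M) = sumNormSq M := by
  simp [sumNormSq]

@[simp] theorem sumNormSq_smul (c : 𝕜) (M : Matrix α β 𝕜) :
    sumNormSq (c • M) = ‖c‖ ^ 2 * sumNormSq M := by
  simp [sumNormSq, Finset.mul_sum, mul_pow]

@[simp] theorem sumNormSq_conjTranspose (M : Matrix α β 𝕜) : sumNormSq Mᴴ = sumNormSq M := by
  rw [sumNormSq, Finset.sum_comm]
  simp [sumNormSq]

@[simp] theorem sumNormSq_diagonal [DecidableEq α] (d : α → 𝕜) :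
    sumNormSq (diagonal d) = ∑ i, ‖d i‖ ^ 2 := by
  simp [sumNormSq, diagonal_apply, apply_ite (fun x : 𝕜 => ‖x‖ ^ 2)]

@[simp] theorem sumNormSq_one [DecidableEq α] : sumNormSq (1 : Matrix α α 𝕜) = Fintype.card α := by
  simp [← diagonal_one]

@[simp] theorem sumNormSq_fromBlocks (A : Matrix α γ 𝕜) (B : Matrix α δ 𝕜) (C : Matrix β γ 𝕜)
    (D : Matrix β δ 𝕜) :
    sumNormSq (fromBlocks A B C D) = sumNormSq A + sumNormSq B + sumNormSq C + sumNormSq D := by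
  simp only [sumNormSq, Fintype.sum_sum_type, fromBlocks_apply₁₁, fromBlocks_apply₁₂,
    fromBlocks_apply₂₁, fromBlocks_apply₂₂, Finset.sum_add_distrib]
  ring

theorem posDef_conjTranspose_mul_self_of_det_ne_zero [DecidableEq α] {F : Matrix α α 𝕜}
    (hF : F.det ≠ 0) : (Fᴴ * F).PosDef :=
  .conjTranspose_mul_self F <| mulVec_injective_iff_isUnit.mpr <|
    (isUnit_iff_isUnit_det F).mpr hF.isUnit

theorem re_det_conjTranspose_mul_self [DecidableEq α] (F : Matrix α α 𝕜) :
    RCLike.re (Fᴴ * F).det = ‖F.det‖ ^ 2 := by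
  rw [det_mul, det_conjTranspose, RCLike.star_def, RCLike.conj_mul]
  norm_cast

theorem two_mul_log_norm_det_le [DecidableEq α] {F : Matrix α α 𝕜} (hF : F.det ≠ 0) :
    2 * Real.log ‖F.det‖ ≤ sumNormSq F - Fintype.card α := by
  have := (posDef_conjTranspose_mul_self_of_det_ne_zero hF).log_det_le_re_trace_sub_card
  rwa [re_det_conjTranspose_mul_self, trace_conjTranspose_mul_self, RCLike.ofReal_re,
    Real.log_pow, Nat.cast_ofNat] at this

theorem two_mul_log_norm_det_eq_iff [DecidableEq α] {F : Matrix α α 𝕜} (hF : F.det ≠ 0) :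
    2 * Real.log ‖F.det‖ = sumNormSq F - Fintype.card α ↔ Fᴴ * F = 1 := by
  have := (posDef_conjTranspose_mul_self_of_det_ne_zero hF).log_det_eq_re_trace_sub_card_iff
  rwa [re_det_conjTranspose_mul_self, trace_conjTranspose_mul_self, RCLike.ofReal_re,
    Real.log_pow, Nat.cast_ofNat] at this

end Matrix

theorem frobSq_eq_sumNormSq {m : ℕ} (B : Matrix (Fin m) (Fin m) ℂ) : frobSq B = sumNormSq B := rfl

section Ftilde

variable (m : ℕ) (z₀ b : ℂ) (lam : Fin m → ℝ) (B20 B02 : Matrix (Fin m) (Fin m) ℂ)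

theorem sumNormSq_Ftilde :
    sumNormSq (Ftilde m z₀ b lam B20 B02)
      = 4 * ∑ j, lam j ^ 2 + 4 * m * ‖z₀‖ ^ 2 + 2 * ‖b‖ ^ 2 * (frobSq B20 + frobSq B02) := by
  simp only [Ftilde, sumNormSq_fromBlocks, sumNormSq_neg, sumNormSq_smul, sumNormSq_one,
    sumNormSq_zero, sumNormSq_conjTranspose, sumNormSq_diagonal, Complex.norm_real,
    Real.norm_eq_abs, sq_abs, Complex.norm_conj, Fintype.card_fin]
  rw [← frobSq_eq_sumNormSq, ← frobSq_eq_sumNormSq]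
  ring

theorem Ftilde_gram_toBlocks₁₂_toBlocks₁₁ :
    ((Ftilde m z₀ b lam B20 B02)ᴴ * Ftilde m z₀ b lam B20 B02).toBlocks₁₂.toBlocks₁₁
      = (starRingEnd ℂ b * (starRingEnd ℂ z₀ - z₀)) • B20ᴴ := by
  simp only [Ftilde, diagonal_neg, fromBlocks_conjTranspose, conjTranspose_smul, RCLike.star_def,
    conjTranspose_zero, conjTranspose_conjTranspose, conjTranspose_one, diagonal_conjTranspose,
    RingHomCompTriple.comp_apply, RingHom.id_apply, conjTranspose_neg, fromBlocks_multiply,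
    Algebra.mul_smul_comm, Algebra.smul_mul_assoc, mul_zero, add_zero, zero_mul, smul_zero,
    zero_add, mul_one, diagonal_mul_diagonal, Pi.star_apply, star_neg, Complex.conj_ofReal, mul_neg,
    neg_mul, neg_neg, one_mul, fromBlocks_add, neg_zero, smul_neg, toBlocks_fromBlocks₁₂,
    toBlocks_fromBlocks₁₁]
  module

theorem Ftilde_gram_toBlocks₁₂_toBlocks₂₂ :
    ((Ftilde m z₀ b lam B20 B02)ᴴ * Ftilde m z₀ b lam B20 B02).toBlocks₁₂.toBlocks₂₂
      = (starRingEnd ℂ b * (z₀ - starRingEnd ℂ z₀)) • B02 := by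
  simp only [Ftilde, diagonal_neg, fromBlocks_conjTranspose, conjTranspose_smul, RCLike.star_def,
    conjTranspose_zero, conjTranspose_conjTranspose, conjTranspose_one, diagonal_conjTranspose,
    RingHomCompTriple.comp_apply, RingHom.id_apply, conjTranspose_neg, fromBlocks_multiply,
    Algebra.mul_smul_comm, Algebra.smul_mul_assoc, mul_zero, add_zero, zero_mul, smul_zero,
    zero_add, mul_one, diagonal_mul_diagonal, Pi.star_apply, star_neg, Complex.conj_ofReal, mul_neg,
    neg_mul, neg_neg, one_mul, fromBlocks_add, neg_zero, smul_neg, toBlocks_fromBlocks₁₂,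
    toBlocks_fromBlocks₂₂]
  module

theorem Ftilde_zero_zero_gram_eq_one_iff :
    (Ftilde m z₀ b lam 0 0)ᴴ * Ftilde m z₀ b lam 0 0 = 1 ↔ ∀ j, ‖z₀‖ ^ 2 + lam j ^ 2 = 1 := by
  set D : Matrix (Fin m) (Fin m) ℂ := diagonal fun j => ((‖z₀‖ ^ 2 + lam j ^ 2 : ℝ) : ℂ)
  have hgram : (Ftilde m z₀ b lam 0 0)ᴴ * Ftilde m z₀ b lam 0 0
      = fromBlocks (fromBlocks D 0 0 D) 0 0 (fromBlocks D 0 0 D) := by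
    simp only [Ftilde, smul_zero, conjTranspose_zero, fromBlocks_zero, diagonal_neg,
      fromBlocks_conjTranspose, conjTranspose_smul, RCLike.star_def, conjTranspose_one,
      diagonal_conjTranspose, RingHomCompTriple.comp_apply, RingHom.id_apply, conjTranspose_neg,
      fromBlocks_multiply, mul_zero, Algebra.mul_smul_comm, mul_one, diagonal_mul_diagonal,
      Pi.star_apply, star_neg, Complex.conj_ofReal, mul_neg, neg_mul, neg_neg,
      Algebra.smul_mul_assoc, one_mul, zero_add, zero_mul, add_zero, smul_neg, fromBlocks_inj,
      true_and]
    refine ⟨⟨?_, ?_, ?_, ?_⟩, ?_, ?_, ?_, ?_⟩ <;> ext i j <;> by_cases h : i = j <;>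
      simp [D, h, one_apply, Complex.mul_conj', Complex.conj_mul'] <;> ring
  rw [hgram, ← fromBlocks_one, ← fromBlocks_one, fromBlocks_inj, fromBlocks_inj, ← diagonal_one]
  simp [D, funext_iff, -Complex.ofReal_add, -Complex.ofReal_pow]

theorem eq_zero_of_Ftilde_gram_eq_one (hb : b ≠ 0) (hz : z₀.im ≠ 0)
    (hG : (Ftilde m z₀ b lam B20 B02)ᴴ * Ftilde m z₀ b lam B20 B02 = 1) : B20 = 0 ∧ B02 = 0 := by
  have h20 : (starRingEnd ℂ b * (starRingEnd ℂ z₀ - z₀)) • B20ᴴ = 0 := by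
    rw [← Ftilde_gram_toBlocks₁₂_toBlocks₁₁ m z₀ b lam B20 B02, hG, ← fromBlocks_one,
      toBlocks_fromBlocks₁₂]
    rfl
  have h02 : (starRingEnd ℂ b * (z₀ - starRingEnd ℂ z₀)) • B02 = 0 := by
    rw [← Ftilde_gram_toBlocks₁₂_toBlocks₂₂ m z₀ b lam B20 B02, hG, ← fromBlocks_one,
      toBlocks_fromBlocks₁₂]
    rfl
  simpa [hb, hz, sub_eq_zero, eq_comm (a := z₀), Complex.conj_eq_iff_im] using And.intro h20 h02

theorem Ftilde_gram_eq_one_and_mul_eq_zero_iff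
    (hcond : (‖b‖ < 1 ∧ ‖z₀‖ < 1) ∨ (‖b‖ = 1 ∧ ‖z₀‖ < 1 ∧ z₀.im ≠ 0)) (hlam : ∀ j, 0 ≤ lam j) :
    ((Ftilde m z₀ b lam B20 B02)ᴴ * Ftilde m z₀ b lam B20 B02 = 1 ∧
        (1 - ‖b‖ ^ 2) * (frobSq B20 + frobSq B02) = 0) ↔
      (∀ j, lam j = √(1 - ‖z₀‖ ^ 2)) ∧ B20 = 0 ∧ B02 = 0 := by
  have hz : 0 ≤ 1 - ‖z₀‖ ^ 2 := by
    rcases hcond with ⟨-, hz⟩ | ⟨-, hz, -⟩ <;> nlinarith [norm_nonneg z₀]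
  have hlam_iff : (∀ j, ‖z₀‖ ^ 2 + lam j ^ 2 = 1) ↔ ∀ j, lam j = √(1 - ‖z₀‖ ^ 2) :=
    forall_congr' fun j => by
      rw [eq_comm (a := lam j), Real.sqrt_eq_iff_eq_sq hz (hlam j)]
      constructor <;> intro <;> linarith
  constructor
  · rintro ⟨hG, hS⟩
    obtain ⟨rfl, rfl⟩ : B20 = 0 ∧ B02 = 0 := by
      rcases hcond with ⟨hb, -⟩ | ⟨hb, -, hz⟩
      · have hb' : 1 - ‖b‖ ^ 2 ≠ 0 := by nlinarith [norm_nonneg b]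
        have h20 := sumNormSq_nonneg B20
        have h02 := sumNormSq_nonneg B02
        rw [frobSq_eq_sumNormSq, frobSq_eq_sumNormSq, mul_eq_zero, or_iff_right hb'] at hS
        exact ⟨sumNormSq_eq_zero_iff.mp (by linarith), sumNormSq_eq_zero_iff.mp (by linarith)⟩
      · have hb' : b ≠ 0 := norm_ne_zero_iff.mp (by simp [hb])
        exact eq_zero_of_Ftilde_gram_eq_one m z₀ b lam B20 B02 hb' hz hG
    exact ⟨hlam_iff.mp ((Ftilde_zero_zero_gram_eq_one_iff m z₀ b lam).mp hG), rfl, rfl⟩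
  · rintro ⟨hl, rfl, rfl⟩
    exact ⟨(Ftilde_zero_zero_gram_eq_one_iff m z₀ b lam).mpr (hlam_iff.mpr hl), by simp [frobSq]⟩

end Ftilde

section PhiFn

variable (m : ℕ) (z₀ b : ℂ) (lam : Fin m → ℝ) (B20 B02 : Matrix (Fin m) (Fin m) ℂ) (t : ℝ)

theorem PhiFn_eq_of_det_ne_zero (hdet : (Ftilde m z₀ b lam B20 B02).det ≠ 0) :
    PhiFn m z₀ b lam B20 B02 t = ((m * (‖z₀‖ ^ 2 - 1)
      - (sumNormSq (Ftilde m z₀ b lam B20 B02) - 4 * m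
        - 2 * Real.log ‖(Ftilde m z₀ b lam B20 B02).det‖) / 4
      - (1 - ‖b‖ ^ 2) / 2 * (frobSq B20 + frobSq B02) - t : ℝ) : EReal) := by
  rw [PhiFn, if_neg hdet, EReal.coe_eq_coe_iff, sumNormSq_Ftilde]
  ring

theorem PhiFn_le_and_eq_iff (hb : ‖b‖ ≤ 1) (ht : 0 ≤ t) :
    PhiFn m z₀ b lam B20 B02 t ≤ ((m * (‖z₀‖ ^ 2 - 1) : ℝ) : EReal) ∧
      (PhiFn m z₀ b lam B20 B02 t = ((m * (‖z₀‖ ^ 2 - 1) : ℝ) : EReal) ↔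
        ((Ftilde m z₀ b lam B20 B02)ᴴ * Ftilde m z₀ b lam B20 B02 = 1 ∧
          (1 - ‖b‖ ^ 2) * (frobSq B20 + frobSq B02) = 0) ∧ t = 0) := by
  set F := Ftilde m z₀ b lam B20 B02
  by_cases hdet : F.det = 0
  · have hG : Fᴴ * F ≠ 1 := fun hG => by simpa [hdet] using congrArg det hG
    rw [PhiFn, if_pos hdet]
    exact ⟨bot_le, iff_of_false (EReal.bot_ne_coe _) fun h => hG h.1.1⟩
  have hcard : (Fintype.card ((Fin m ⊕ Fin m) ⊕ (Fin m ⊕ Fin m)) : ℝ) = 4 * m := by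
    simp only [Fintype.card_sum, Fintype.card_fin]
    push_cast
    ring
  have hgap := two_mul_log_norm_det_le hdet
  have hgap_iff := two_mul_log_norm_det_eq_iff hdet
  rw [hcard] at hgap hgap_iff
  have hS : 0 ≤ (1 - ‖b‖ ^ 2) * (frobSq B20 + frobSq B02) :=
    mul_nonneg (by nlinarith [norm_nonneg b])
      (add_nonneg (sumNormSq_nonneg B20) (sumNormSq_nonneg B02))
  rw [PhiFn_eq_of_det_ne_zero m z₀ b lam B20 B02 t hdet, EReal.coe_le_coe_iff,
    EReal.coe_eq_coe_iff, ← hgap_iff]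
  refine ⟨by linarith, fun h => ⟨⟨by linarith, by linarith⟩, by linarith⟩,
    fun ⟨⟨h1, h2⟩, h3⟩ => by linarith⟩

end PhiFn

theorem phi_global_max_general (m : ℕ) (b z₀ : ℂ)
    (hcond : (‖b‖ < 1 ∧ ‖z₀‖ < 1) ∨
      (‖b‖ = 1 ∧ ‖z₀‖ < 1 ∧ z₀.im ≠ 0))
    (lam : Fin m → ℝ) (hlam : ∀ j, 0 ≤ lam j)
    (B20 B02 : Matrix (Fin m) (Fin m) ℂ)
    (t : ℝ) (ht : 0 ≤ t) :
    PhiFn m z₀ b lam B20 B02 t ≤ (((m : ℝ) * (‖z₀‖ ^ 2 - 1) : ℝ) : EReal) ∧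
    (PhiFn m z₀ b lam B20 B02 t = (((m : ℝ) * (‖z₀‖ ^ 2 - 1) : ℝ) : EReal) ↔
      ((∀ j, lam j = Real.sqrt (1 - ‖z₀‖ ^ 2)) ∧ B20 = 0 ∧ B02 = 0 ∧ t = 0)) := by
  have hb : ‖b‖ ≤ 1 := by rcases hcond with ⟨hb, -⟩ | ⟨hb, -⟩ <;> linarith
  obtain ⟨hle, heq_iff⟩ := PhiFn_le_and_eq_iff m z₀ b lam B20 B02 t hb ht
  rw [heq_iff, Ftilde_gram_eq_one_and_mul_eq_zero_iff m z₀ b lam B20 B02 hcond hlam]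
  exact ⟨hle, by simp only [and_assoc]⟩

/-- Lemma 3.1 of the paper.  Let `m ≥ 1` and let `b, z₀ ∈ ℂ` satisfy
Condition (i) (`|b| < 1`, `|z₀| < 1`) or Condition (ii) (`|b| = 1`, `|z₀| < 1`, `z₀ ∉ ℝ`).
Then for all `λ_j ≥ 0`, skew-symmetric `B₂₀, B₀₂` and `t ≥ 0` one has
`Φ(Λ,B₂₀,B₀₂,t) ≤ m(|z₀|² - 1)` with equality iff `λ₁ = ⋯ = λ_m = λ₀ := √(1-|z₀|²)`,
`B₂₀ = 0`, `B₀₂ = 0`, `t = 0`. -/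
theorem phi_global_max (m : ℕ) (hm : 1 ≤ m) (b z₀ : ℂ)
    (hcond : (‖b‖ < 1 ∧ ‖z₀‖ < 1) ∨
      (‖b‖ = 1 ∧ ‖z₀‖ < 1 ∧ z₀.im ≠ 0))
    (lam : Fin m → ℝ) (hlam : ∀ j, 0 ≤ lam j)
    (B20 B02 : Matrix (Fin m) (Fin m) ℂ)
    (hB20 : B20ᵀ = -B20) (hB02 : B02ᵀ = -B02)
    (t : ℝ) (ht : 0 ≤ t) :
    PhiFn m z₀ b lam B20 B02 t ≤ (((m : ℝ) * (‖z₀‖ ^ 2 - 1) : ℝ) : EReal) ∧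
    (PhiFn m z₀ b lam B20 B02 t = (((m : ℝ) * (‖z₀‖ ^ 2 - 1) : ℝ) : EReal) ↔
      ((∀ j, lam j = Real.sqrt (1 - ‖z₀‖ ^ 2)) ∧ B20 = 0 ∧ B02 = 0 ∧ t = 0)) :=
  phi_global_max_general m b z₀ hcond lam hlam B20 B02 t ht
end

section
/- Let m ≥ 1, z_0 ∈ ℂ, b ∈ ℂ, let Λ = diag(λ_1,…,λ_m) be a real diagonal matrix and let B_{20}, B_{02} be skew-symmetric complex m×m matrices. Then |det F̃(Λ,B_{20},B_{02})| ≤ ∏_{j=1}^m ( |z_0|² + λ_j² + |b|²·Σ_{k=1}^m |(B_{20})_{jk}|² ) · ( |z_0|² + λ_j² + |b|²·Σ_{k=1}^m |(B_{02})_{jk}|² ). -/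
/-!
Hadamard's inequality `‖det M‖ ≤ ∏ᵢ ‖Mᵢ‖` over the rows of `M` comes from Gram–Schmidt: in the
orthonormal basis `e` obtained from the rows `vᵢ`, the coordinate matrix of the rows is triangular,
so `det M` equals, up to a unimodular factor, `∏ᵢ ⟪eᵢ, vᵢ⟫`, and each factor is at most `‖vᵢ‖`.

In each of the four block rows of `F̃`, row `j` has squared norm `|z₀|² + λⱼ² + |b|²·Σₖ |Bⱼₖ|²`
with `B = B₂₀` or `B₀₂`: the blocks `B₂₀ᴴ` and `B₀₂ᴴ` contribute column sums, which equal the row sums by skew-symmetry.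
Every factor of the bound therefore appears twice among the row norms of `F̃`.
-/

open Matrix

namespace Matrix

variable {𝕜 l m n o : Type*} [RCLike 𝕜] [Fintype n] [Fintype o]

def rowNormSq (A : Matrix m n 𝕜) (i : m) : ℝ := ∑ j, ‖A i j‖ ^ 2

theorem rowNormSq_nonneg (A : Matrix m n 𝕜) (i : m) : 0 ≤ A.rowNormSq i := by
  unfold rowNormSq; positivity

@[simp]
theorem rowNormSq_zero (i : m) : (0 : Matrix m n 𝕜).rowNormSq i = 0 := by
  simp [rowNormSq]

@[simp]
theorem rowNormSq_neg (A : Matrix m n 𝕜) (i : m) : (-A).rowNormSq i = A.rowNormSq i := by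
  simp [rowNormSq]

@[simp]
theorem rowNormSq_smul (c : 𝕜) (A : Matrix m n 𝕜) (i : m) :
    (c • A).rowNormSq i = ‖c‖ ^ 2 * A.rowNormSq i := by
  simp [rowNormSq, mul_pow, Finset.mul_sum]

@[simp]
theorem rowNormSq_diagonal [DecidableEq n] (d : n → 𝕜) (i : n) :
    (diagonal d).rowNormSq i = ‖d i‖ ^ 2 := by
  rw [rowNormSq, Fintype.sum_eq_single i fun j hj => by simp [diagonal_apply_ne _ (Ne.symm hj)]]
  simp

@[simp]
theorem rowNormSq_one [DecidableEq n] (i : n) : (1 : Matrix n n 𝕜).rowNormSq i = 1 := by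
  simp [← diagonal_one]

@[simp]
theorem rowNormSq_fromBlocks_inl (A : Matrix l n 𝕜) (B : Matrix l o 𝕜) (C : Matrix m n 𝕜)
    (D : Matrix m o 𝕜) (i : l) :
    (fromBlocks A B C D).rowNormSq (Sum.inl i) = A.rowNormSq i + B.rowNormSq i := by
  simp [rowNormSq, Fintype.sum_sum_type]

@[simp]
theorem rowNormSq_fromBlocks_inr (A : Matrix l n 𝕜) (B : Matrix l o 𝕜) (C : Matrix m n 𝕜)
    (D : Matrix m o 𝕜) (i : m) :
    (fromBlocks A B C D).rowNormSq (Sum.inr i) = C.rowNormSq i + D.rowNormSq i := by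
  simp [rowNormSq, Fintype.sum_sum_type]

theorem rowNormSq_conjTranspose_of_transpose_eq_neg {A : Matrix n n 𝕜} (hA : Aᵀ = -A) (i : n) :
    Aᴴ.rowNormSq i = A.rowNormSq i := by
  have hcol : ∀ j, A j i = -A i j := fun j => by simpa using congrFun (congrFun hA i) j
  simp [rowNormSq, hcol]

theorem norm_det_le_prod_sqrt_rowNormSq_fin {k : ℕ} (M : Matrix (Fin k) (Fin k) 𝕜) :
    ‖M.det‖ ≤ ∏ i, √(M.rowNormSq i) := by
  let v : Fin k → EuclideanSpace 𝕜 (Fin k) := fun i => WithLp.toLp 2 (M i)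
  let e := EuclideanSpace.basisFun (Fin k) 𝕜
  let b := InnerProductSpace.gramSchmidtOrthonormalBasis
    (finrank_euclideanSpace (𝕜 := 𝕜) (ι := Fin k)) v
  have hdet : M.det = e.toBasis.det b * b.toBasis.det v := by
    rw [Module.Basis.det_apply, Module.Basis.det_apply, ← det_mul, ← b.coe_toBasis,
      Module.Basis.toMatrix_mul_toMatrix, ← det_transpose]
    -- the coordinate matrix of the rows of `M` in the standard basis is `Mᵀ`
    rfl
  rw [hdet, norm_mul, e.det_to_matrix_orthonormalBasis b, one_mul,
    InnerProductSpace.gramSchmidtOrthonormalBasis_det, norm_prod]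
  refine Finset.prod_le_prod (fun i _ => norm_nonneg _) fun i _ => ?_
  calc ‖inner 𝕜 (b i) (v i)‖ ≤ ‖b i‖ * ‖v i‖ := norm_inner_le_norm _ _
    _ = √(M.rowNormSq i) := by rw [b.norm_eq_one, one_mul, EuclideanSpace.norm_eq]; rfl

theorem norm_det_le_prod_sqrt_rowNormSq [DecidableEq n] (M : Matrix n n 𝕜) :
    ‖M.det‖ ≤ ∏ i, √(M.rowNormSq i) := by
  let σ := Fintype.equivFin n
  calc ‖M.det‖ = ‖(reindex σ σ M).det‖ := by rw [det_reindex_self]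
    _ ≤ ∏ i, √((reindex σ σ M).rowNormSq i) := norm_det_le_prod_sqrt_rowNormSq_fin _
    _ = ∏ i, √(M.rowNormSq i) := by
      have hrow i : (reindex σ σ M).rowNormSq i = M.rowNormSq (σ.symm i) :=
        σ.symm.sum_comp fun j => ‖M (σ.symm i) j‖ ^ 2
      simp only [hrow]
      exact σ.symm.prod_comp fun i => √(M.rowNormSq i)

end Matrix

section FtildeRows

variable {m : ℕ} {z₀ b : ℂ} {lam : Fin m → ℝ} {B20 B02 : Matrix (Fin m) (Fin m) ℂ}

theorem rowNormSq_Ftilde_inl_inl (j : Fin m) :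
    (Ftilde m z₀ b lam B20 B02).rowNormSq (Sum.inl (Sum.inl j)) =
      ‖z₀‖ ^ 2 + lam j ^ 2 + ‖b‖ ^ 2 * B20.rowNormSq j := by
  simp [Ftilde]; ring

theorem rowNormSq_Ftilde_inl_inr (hB02 : B02ᵀ = -B02) (j : Fin m) :
    (Ftilde m z₀ b lam B20 B02).rowNormSq (Sum.inl (Sum.inr j)) =
      ‖z₀‖ ^ 2 + lam j ^ 2 + ‖b‖ ^ 2 * B02.rowNormSq j := by
  simp [Ftilde, rowNormSq_conjTranspose_of_transpose_eq_neg hB02]; ring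

theorem rowNormSq_Ftilde_inr_inl (hB20 : B20ᵀ = -B20) (j : Fin m) :
    (Ftilde m z₀ b lam B20 B02).rowNormSq (Sum.inr (Sum.inl j)) =
      ‖z₀‖ ^ 2 + lam j ^ 2 + ‖b‖ ^ 2 * B20.rowNormSq j := by
  simp [Ftilde, rowNormSq_conjTranspose_of_transpose_eq_neg hB20]

theorem rowNormSq_Ftilde_inr_inr (j : Fin m) :
    (Ftilde m z₀ b lam B20 B02).rowNormSq (Sum.inr (Sum.inr j)) =
      ‖z₀‖ ^ 2 + lam j ^ 2 + ‖b‖ ^ 2 * B02.rowNormSq j := by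
  simp [Ftilde]; ring

end FtildeRows

theorem abs_det_Ftilde_le_general (m : ℕ) (z₀ b : ℂ)
    (lam : Fin m → ℝ)
    (B20 B02 : Matrix (Fin m) (Fin m) ℂ)
    (hB20 : B20ᵀ = -B20) (hB02 : B02ᵀ = -B02) :
    ‖(Ftilde m z₀ b lam B20 B02).det‖ ≤
      ∏ j, ((‖z₀‖ ^ 2 + lam j ^ 2
              + ‖b‖ ^ 2 * ∑ k, ‖B20 j k‖ ^ 2) *
            (‖z₀‖ ^ 2 + lam j ^ 2
              + ‖b‖ ^ 2 * ∑ k, ‖B02 j k‖ ^ 2)) := by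
  let X : Fin m → ℝ := fun j => ‖z₀‖ ^ 2 + lam j ^ 2 + ‖b‖ ^ 2 * B20.rowNormSq j
  let Y : Fin m → ℝ := fun j => ‖z₀‖ ^ 2 + lam j ^ 2 + ‖b‖ ^ 2 * B02.rowNormSq j
  have hX j : 0 ≤ X j := by have := B20.rowNormSq_nonneg j; positivity
  have hY j : 0 ≤ Y j := by have := B02.rowNormSq_nonneg j; positivity
  calc ‖(Ftilde m z₀ b lam B20 B02).det‖
      ≤ ∏ i, √((Ftilde m z₀ b lam B20 B02).rowNormSq i) := norm_det_le_prod_sqrt_rowNormSq _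
    _ = ∏ j, √(X j) * √(Y j) * (√(X j) * √(Y j)) := by
      simp only [Fintype.prod_sum_type, rowNormSq_Ftilde_inl_inl, rowNormSq_Ftilde_inl_inr hB02,
        rowNormSq_Ftilde_inr_inl hB20, rowNormSq_Ftilde_inr_inr, ← Finset.prod_mul_distrib]
      rfl
    _ = ∏ j, X j * Y j := by
      simp only [← Real.sqrt_mul (hX _), Real.mul_self_sqrt (mul_nonneg (hX _) (hY _))]

/-- the Hadamard-type bound, inequality (3.3) of the paper.
For all `m ≥ 1`, `z₀, b ∈ ℂ`, real diagonal `Λ = diag(λ₁,…,λ_m)` and skew-symmetric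
complex `B₂₀, B₀₂`:
`|det F̃| ≤ ∏_j (|z₀|² + λ_j² + |b|²·Σ_k |(B₂₀)_{jk}|²)·(|z₀|² + λ_j² + |b|²·Σ_k |(B₀₂)_{jk}|²)`. -/
theorem abs_det_Ftilde_le (m : ℕ) (hm : 1 ≤ m) (z₀ b : ℂ)
    (lam : Fin m → ℝ)
    (B20 B02 : Matrix (Fin m) (Fin m) ℂ)
    (hB20 : B20ᵀ = -B20) (hB02 : B02ᵀ = -B02) :
    ‖(Ftilde m z₀ b lam B20 B02).det‖ ≤
      ∏ j, ((‖z₀‖ ^ 2 + lam j ^ 2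
              + ‖b‖ ^ 2 * ∑ k, ‖B20 j k‖ ^ 2) *
            (‖z₀‖ ^ 2 + lam j ^ 2
              + ‖b‖ ^ 2 * ∑ k, ‖B02 j k‖ ^ 2)) :=
  abs_det_Ftilde_le_general m z₀ b lam B20 B02 hB20 hB02
end

section
/- Let κ, z_0 ∈ ℂ satisfy Condition (i) or Condition (ii). Then d_1(κ) := |1 - |κ|·z_0²|² - |κ|²·(1 - |z_0|²)² > 0. -/
theorem Complex.norm_one_sub_mul_sq_sq_sub (k : ℝ) (z : ℂ) :
    ‖1 - (k : ℂ) * z ^ 2‖ ^ 2 - k ^ 2 * (1 - ‖z‖ ^ 2) ^ 2 =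
      (1 - k) * (1 + k - 2 * k * ‖z‖ ^ 2) + 4 * k * z.im ^ 2 := by
  rw [Complex.sq_norm, Complex.sq_norm]
  simp only [Complex.normSq_apply, Complex.sub_re, Complex.sub_im,
    Complex.mul_re, Complex.mul_im, Complex.ofReal_re, Complex.ofReal_im, Complex.one_re,
    Complex.one_im, pow_two]
  ring

/-- Let `κ, z₀ ∈ ℂ` satisfy Condition (i) (`|κ| < 1` and `|z₀| < 1`) or
Condition (ii) (`|κ| = 1`, `|z₀| < 1` and `z₀ ∉ ℝ`).  Then
`d₁(κ) := |1 - |κ|·z₀²|² - |κ|²·(1 - |z₀|²)² > 0`. -/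
theorem d_one_pos (κ z₀ : ℂ)
    (hcond : (‖κ‖ < 1 ∧ ‖z₀‖ < 1) ∨
      (‖κ‖ = 1 ∧ ‖z₀‖ < 1 ∧ z₀.im ≠ 0)) :
    0 < ‖1 - (‖κ‖ : ℂ) * z₀ ^ 2‖ ^ 2 -
      ‖κ‖ ^ 2 * (1 - ‖z₀‖ ^ 2) ^ 2 := by
  rw [Complex.norm_one_sub_mul_sq_sq_sub]
  rcases hcond with ⟨hκ, hz₀⟩ | ⟨hκ, -, him⟩
  · have hz₀_sq : ‖z₀‖ ^ 2 < 1 := by nlinarith [norm_nonneg z₀]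
    have hfactor : 0 < 1 + ‖κ‖ - 2 * ‖κ‖ * ‖z₀‖ ^ 2 := by nlinarith [norm_nonneg κ]
    have him_term : 0 ≤ 4 * ‖κ‖ * z₀.im ^ 2 := by positivity
    nlinarith [mul_pos (sub_pos.2 hκ) hfactor]
  · rw [hκ]
    norm_num
    positivity
end

section
/- Let a ∈ ℂ and t ∈ ℝ satisfy Re(a) > |t|. Then the function (q_1,q_2) ↦ exp( -a|q_1|² - conj(a)|q_2|² - t(q_1 q_2 + conj(q_1 q_2)) ) is absolutely integrable on ℂ², and ∫_{ℂ²} exp( -a|q_1|² - conj(a)|q_2|² - t(q_1 q_2 + conj(q_1 q_2)) ) dA(q_1) dA(q_2) = π² / ( |a|² - t² ). -/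
/-!
Integrating out `q₂` first is a Gaussian integral with a linear term: completing the square
gives `π / conj a` times a Gaussian in `q₁` with coefficient `a - t² / conj a`, whose integral is
`π / (a - t² / conj a)`; the product is `π² / (|a|² - t²)`. Integrability follows the same way
from Tonelli, since the modulus of the integrand is a function of the same shape with `a`
replaced by `Re a`.
-/

open MeasureTheory Complex Real
open scoped InnerProductSpace

theorem Complex.re_inv_le_inv_re {z : ℂ} (hz : 0 < z.re) : z⁻¹.re ≤ z.re⁻¹ := by
  have hsq : z.re ^ 2 ≤ normSq z := by rw [normSq_apply]; nlinarith [sq_nonneg z.im]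
  rw [inv_re, div_le_iff₀ (by linarith [sq_pos_of_pos hz])]
  calc z.re = z.re⁻¹ * z.re ^ 2 := by field_simp
    _ ≤ z.re⁻¹ * normSq z := by gcongr

theorem re_sub_sq_div_pos {b₁ b₂ : ℂ} {c : ℝ} (hb₂ : 0 < b₂.re) (hc : c ^ 2 < 4 * b₁.re * b₂.re) :
    0 < (b₁ - c ^ 2 / (4 * b₂)).re := by
  have hinv : (c ^ 2 / (4 * b₂) : ℂ).re ≤ c ^ 2 / 4 * b₂.re⁻¹ := by
    rw [div_eq_mul_inv, mul_inv, ← mul_assoc, ← ofReal_pow]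
    rw [show ((c ^ 2 : ℝ) : ℂ) * 4⁻¹ = ((c ^ 2 / 4 : ℝ) : ℂ) by push_cast; ring, re_ofReal_mul]
    gcongr
    exact Complex.re_inv_le_inv_re hb₂
  have : c ^ 2 / 4 * b₂.re⁻¹ < b₁.re := by
    rw [← div_eq_mul_inv, div_lt_iff₀ hb₂]; linarith
  rw [sub_re]; linarith

section
variable {V W : Type*} [NormedAddCommGroup V] [InnerProductSpace ℝ V]
  [NormedAddCommGroup W] [InnerProductSpace ℝ W]

/-- The isometry `L` lets the coupling `Re (q₁ q₂) = ⟪conj q₁, q₂⟫_ℝ` of the theorem fit in. -/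
noncomputable def coupledGaussian (b₁ b₂ : ℂ) (c : ℝ) (L : V →ₗᵢ[ℝ] W) (p : V × W) : ℂ :=
  cexp (-b₁ * ‖p.1‖ ^ 2 - b₂ * ‖p.2‖ ^ 2 + c * ⟪L p.1, p.2⟫_ℝ)

variable {b₁ b₂ : ℂ} {c : ℝ} {L : V →ₗᵢ[ℝ] W}

theorem continuous_coupledGaussian : Continuous (coupledGaussian b₁ b₂ c L) := by
  unfold coupledGaussian; fun_prop

theorem ofReal_norm_coupledGaussian (p : V × W) :
    (‖coupledGaussian b₁ b₂ c L p‖ : ℂ) = coupledGaussian b₁.re b₂.re c L p := by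
  simp [coupledGaussian, norm_exp, ← ofReal_pow]

theorem coupledGaussian_eq_mul (x : V) (y : W) :
    coupledGaussian b₁ b₂ c L (x, y) =
      cexp (-b₂ * ‖y‖ ^ 2 + c * ⟪L x, y⟫_ℝ) * cexp (-b₁ * ‖x‖ ^ 2) := by
  rw [coupledGaussian, ← Complex.exp_add]
  ring_nf

variable [FiniteDimensional ℝ W] [MeasurableSpace W] [BorelSpace W]

theorem integrable_coupledGaussian_section (hb₂ : 0 < b₂.re) (x : V) :
    Integrable (fun y => coupledGaussian b₁ b₂ c L (x, y)) := by
  simp_rw [coupledGaussian_eq_mul]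
  exact (GaussianFourier.integrable_cexp_neg_mul_sq_norm_add hb₂ _ _).mul_const _

theorem integral_coupledGaussian_section (hb₂ : 0 < b₂.re) (x : V) :
    ∫ y, coupledGaussian b₁ b₂ c L (x, y) =
      (π / b₂) ^ (Module.finrank ℝ W / 2 : ℂ) * cexp (-(b₁ - c ^ 2 / (4 * b₂)) * ‖x‖ ^ 2) := by
  simp_rw [coupledGaussian_eq_mul]
  rw [integral_mul_const, GaussianFourier.integral_cexp_neg_mul_sq_norm_add hb₂, mul_assoc,
    ← Complex.exp_add, L.norm_map]
  congr 2
  ring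

variable [FiniteDimensional ℝ V] [MeasurableSpace V] [BorelSpace V]

theorem integrable_coupledGaussian (hb₂ : 0 < b₂.re) (hc : c ^ 2 < 4 * b₁.re * b₂.re) :
    Integrable (coupledGaussian b₁ b₂ c L) := by
  have hβ : 0 < (b₁.re - c ^ 2 / (4 * b₂.re) : ℂ).re := by
    simpa using re_sub_sq_div_pos (b₁ := b₁.re) (b₂ := b₂.re) (c := c) (by simpa) (by simpa)
  -- `‖coupledGaussian b₁ b₂ c L‖` is `coupledGaussian b₁.re b₂.re c L`, so its sections
  -- integrate to a Gaussian in `x` as well.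
  have hnorm : ∀ x : V, ((∫ y, ‖coupledGaussian b₁ b₂ c L (x, y)‖ : ℝ) : ℂ) =
      (π / b₂.re) ^ (Module.finrank ℝ W / 2 : ℂ) *
        cexp (-(b₁.re - c ^ 2 / (4 * b₂.re)) * ‖x‖ ^ 2) := fun x => by
    have := integral_coupledGaussian_section (b₁ := b₁.re) (c := c) (L := L) (b₂ := b₂.re)
      (by simpa) x
    simp_rw [← ofReal_norm_coupledGaussian] at this
    exact_mod_cast this
  refine (integrable_prod_iff continuous_coupledGaussian.aestronglyMeasurable).mpr
    ⟨.of_forall (integrable_coupledGaussian_section hb₂), ?_⟩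
  refine (((GaussianFourier.integrable_cexp_neg_mul_sq_norm_add hβ 0 (0 : V)).const_mul
    ((π / b₂.re) ^ (Module.finrank ℝ W / 2 : ℂ))).re).congr (.of_forall fun x => ?_)
  simp only [zero_mul, add_zero]
  rw [← hnorm x]
  rfl

theorem integral_coupledGaussian (hb₂ : 0 < b₂.re) (hc : c ^ 2 < 4 * b₁.re * b₂.re) :
    ∫ p, coupledGaussian b₁ b₂ c L p =
      (π / b₂) ^ (Module.finrank ℝ W / 2 : ℂ) *
        (π / (b₁ - c ^ 2 / (4 * b₂))) ^ (Module.finrank ℝ V / 2 : ℂ) := by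
  rw [Measure.volume_eq_prod, integral_prod _ (integrable_coupledGaussian hb₂ hc)]
  simp_rw [integral_coupledGaussian_section hb₂]
  rw [integral_const_mul, GaussianFourier.integral_cexp_neg_mul_sq_norm (re_sub_sq_div_pos hb₂ hc)]

end

theorem Complex.real_inner_conj_left (z w : ℂ) : ⟪(starRingEnd ℂ) z, w⟫_ℝ = (z * w).re := by
  rw [Complex.inner, conj_conj, mul_re, mul_re]; ring

theorem coupledGaussian_conjLIE (a : ℂ) (t : ℝ) (q : ℂ × ℂ) :
    coupledGaussian a ((starRingEnd ℂ) a) (-2 * t) conjLIE.toLinearIsometry q =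
      cexp (-a * ‖q.1‖ ^ 2 - (starRingEnd ℂ) a * ‖q.2‖ ^ 2
        - t * (q.1 * q.2 + (starRingEnd ℂ) (q.1 * q.2))) := by
  simp only [coupledGaussian, LinearIsometryEquiv.coe_toLinearIsometry, conjLIE_apply,
    Complex.real_inner_conj_left, add_conj]
  push_cast
  ring_nf

/-- Let `a ∈ ℂ` and `t ∈ ℝ` satisfy `Re a > |t|`.  Then the function
`(q₁,q₂) ↦ exp( -a|q₁|² - conj(a)|q₂|² - t(q₁q₂ + conj(q₁q₂)) )` is absolutely integrable
on `ℂ²` and its integral (w.r.t. Lebesgue measure on `ℂ² ≅ ℝ⁴`) equals `π²/(|a|² - t²)`. -/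
theorem gaussian_integral_complex_pair (a : ℂ) (t : ℝ) (h : |t| < a.re) :
    Integrable (fun q : ℂ × ℂ =>
        Complex.exp (-a * ‖q.1‖ ^ 2 - (starRingEnd ℂ) a * ‖q.2‖ ^ 2
          - (t : ℂ) * (q.1 * q.2 + (starRingEnd ℂ) (q.1 * q.2)))) volume ∧
    ∫ q : ℂ × ℂ,
        Complex.exp (-a * ‖q.1‖ ^ 2 - (starRingEnd ℂ) a * ‖q.2‖ ^ 2
          - (t : ℂ) * (q.1 * q.2 + (starRingEnd ℂ) (q.1 * q.2)))
      = ((Real.pi ^ 2 / (‖a‖ ^ 2 - t ^ 2) : ℝ) : ℂ) := by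
  have hre : 0 < ((starRingEnd ℂ) a).re := by rw [conj_re]; linarith [abs_nonneg t]
  have hc : (-2 * t) ^ 2 < 4 * a.re * ((starRingEnd ℂ) a).re := by
    rw [conj_re]; nlinarith [sq_abs t, abs_nonneg t]
  simp only [← coupledGaussian_conjLIE]
  refine ⟨integrable_coupledGaussian hre hc, ?_⟩
  have hconj : (starRingEnd ℂ) a ≠ 0 := by rintro h0; simp [h0] at hre
  have hden : (starRingEnd ℂ) a * (a - (-2 * t : ℝ) ^ 2 / (4 * (starRingEnd ℂ) a)) =
      ‖a‖ ^ 2 - t ^ 2 := by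
    have hmul : (starRingEnd ℂ) a * a = ‖a‖ ^ 2 := by rw [mul_comm, mul_conj']
    field_simp
    push_cast
    linear_combination 4 * hmul
  rw [integral_coupledGaussian hre hc, finrank_real_complex, show ((2 : ℕ) : ℂ) / 2 = 1 by norm_num, cpow_one, cpow_one, div_mul_div_comm, hden]
  push_cast
  ring
end
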